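/- arXiv:1409.5109 — 2 statements merged into one kernel-verified Lean document; each statement's English description precedes it below -/
import Mathlib

section
/- If two multivariable dynamical systems (X, σ) and (Y, τ) are partition conjugate via a homeomorphism γ and sets V_{i,j}, then they are piecewise conjugate: setting W_α = ⋂_{i=1}^n V_{i,α(i)} for each permutation α ∈ S_n, the family {W_α : α ∈ S_n} is an open cover of X, and γ⁻¹ ∘ τ_{α(i)} ∘ γ agrees with σ_i on W_α for every i. -/
/-- A witness to partition conjugacy. -/
def PartitionConjugacyWitness {X Y : Type*} [TopologicalSpace X] [TopologicalSpace Y] {n : ℕ}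
    (σ : Fin n → X → X) (τ : Fin n → Y → Y) (γ : X ≃ₜ Y) (V : Fin n → Fin n → Set X) : Prop :=
  (∀ i j, IsClopen (V i j)) ∧
  (∀ j, (⋃ i, V i j) = Set.univ) ∧
  (∀ j i i', i ≠ i' → V i j ∩ V i' j = ∅) ∧
  (∀ i, (⋃ j, V i j) = Set.univ) ∧
  (∀ i j j', j ≠ j' → V i j ∩ V i j' = ∅) ∧
  (∀ i j, ∀ x ∈ V i j, σ i x = γ.symm (τ j (γ x))) ∧
  (∀ i j, σ i ⁻¹' (σ i '' V i j) = V i j) ∧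
  (∀ i j, ⇑γ ⁻¹' (τ j ⁻¹' (τ j '' (⇑γ '' V i j))) = V i j)

/-- Partition conjugacy implies piecewise conjugacy: the sets
`W α = ⋂ i, V i (α i)`, for `α` a permutation, form an open cover of `X` on each member of
which `γ⁻¹ ∘ τ (α i) ∘ γ` agrees with `σ i`. -/
theorem partitionConjugate_implies_piecewiseConjugate
    {X Y : Type*} [TopologicalSpace X] [TopologicalSpace Y] {n : ℕ}
    (σ : Fin n → X → X) (τ : Fin n → Y → Y)
    (hσ : ∀ i, Continuous (σ i)) (hτ : ∀ i, Continuous (τ i))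
    (γ : X ≃ₜ Y) (V : Fin n → Fin n → Set X)
    (hW : PartitionConjugacyWitness σ τ γ V) :
    (∀ α : Equiv.Perm (Fin n), IsOpen (⋂ i, V i (α i))) ∧
    (⋃ α : Equiv.Perm (Fin n), ⋂ i, V i (α i)) = Set.univ ∧
    (∀ α : Equiv.Perm (Fin n), ∀ x ∈ ⋂ i, V i (α i), ∀ i,
      γ.symm (τ (α i) (γ x)) = σ i x) := by
  obtain ⟨hclopen, hcolcov, hcoldisj, hrowcov, hrowdisj, hconj, -, -⟩ := hW
  refine ⟨fun α => isOpen_iInter_of_finite fun i => (hclopen i (α i)).2, ?_, ?_⟩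
  · apply Set.eq_univ_of_forall
    intro x
    have hex : ∀ i, ∃ j, x ∈ V i j := by
      intro i
      have := (hrowcov i).symm ▸ Set.mem_univ x
      exact Set.mem_iUnion.mp this
    choose f hf using hex
    have hinj : Function.Injective f := by
      intro i i' h
      by_contra hne
      have := hcoldisj (f i) i i' hne
      exact absurd this (by
        apply Set.nonempty_iff_ne_empty.mp
        exact ⟨x, hf i, h ▸ hf i'⟩)
    let α : Equiv.Perm (Fin n) := Equiv.ofBijective f (Finite.injective_iff_bijective.mp hinj)
    refine Set.mem_iUnion.mpr ⟨α, Set.mem_iInter.mpr fun i => ?_⟩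
    exact hf i
  · intro α x hx i
    exact (hconj i (α i) x (Set.mem_iInter.mp hx i)).symm
end

section
/- Let X be a countable discrete set and (X, {σ_1, σ_2}) and (X, {τ_1, τ_2}) two dynamical systems on X with two maps each. Define an equivalence relation on X as the smallest equivalence relation such that x ~ z whenever σ_i(x) = σ_j(z) for some i, j ∈ {1, 2}. Suppose the two systems are partition conjugate via the identity map of X (i.e., there are sets V_{i,j} ⊆ X with each row and each column of {V_{i,j}} partitioning X, σ_i = τ_j on V_{i,j}, and σ_i⁻¹(σ_i(V_{i,j})) = V_{i,j} = τ_j⁻¹(τ_j(V_{i,j}))). If X consists of a single equivalence class, then the systems are conjugate: either (σ_1 = τ_1 and σ_2 = τ_2) or (σ_1 = τ_2 and σ_2 = τ_1). -/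
/-- For a countable discrete two-map dynamical system consisting of a single equivalence
class (under the smallest equivalence relation generated by `σ i x = σ j z`), partition
conjugacy via the identity map implies conjugacy. -/
theorem partitionConjugate_single_class_implies_conjugate
    {X : Type*} [Countable X] (σ τ : Fin 2 → X → X)
    (hclass : ∀ x y : X, Relation.EqvGen (fun x z => ∃ i j : Fin 2, σ i x = σ j z) x y)
    (V : Fin 2 → Fin 2 → Set X)
    (hcol : ∀ j, (⋃ i, V i j) = Set.univ)
    (hcol' : ∀ j i i', i ≠ i' → V i j ∩ V i' j = ∅)
    (hrow : ∀ i, (⋃ j, V i j) = Set.univ)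
    (hrow' : ∀ i j j', j ≠ j' → V i j ∩ V i j' = ∅)
    (hagree : ∀ i j, ∀ x ∈ V i j, σ i x = τ j x)
    (hsatσ : ∀ i j, σ i ⁻¹' (σ i '' V i j) = V i j)
    (hsatτ : ∀ i j, τ j ⁻¹' (τ j '' V i j) = V i j) :
    (σ 0 = τ 0 ∧ σ 1 = τ 1) ∨ (σ 0 = τ 1 ∧ σ 1 = τ 0) := by
  classical
  have mem : ∀ (x : X) (i : Fin 2), ∃ j, x ∈ V i j := by
    intro x i
    have hx : x ∈ (⋃ j, V i j) := (hrow i) ▸ Set.mem_univ x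
    simpa using hx
  have uniq : ∀ (x : X) (i j j' : Fin 2), x ∈ V i j → x ∈ V i j' → j = j' := by
    intro x i j j' h h'
    by_contra hne
    have h0 := hrow' i j j' hne
    exact absurd (h0 ▸ (Set.mem_inter h h' : x ∈ V i j ∩ V i j')) (Set.notMem_empty x)
  have cuniq : ∀ (x : X) (j i i' : Fin 2), x ∈ V i j → x ∈ V i' j → i = i' := by
    intro x j i i' h h'
    by_contra hne
    have h0 := hcol' j i i' hne
    exact absurd (h0 ▸ (Set.mem_inter h h' : x ∈ V i j ∩ V i' j)) (Set.notMem_empty x)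
  have fin2 : ∀ a b c : Fin 2, a ≠ b → c ≠ b → a = c := by decide
  have same : ∀ (x z : X) (i0 a : Fin 2), x ∈ V i0 a → z ∈ V i0 a →
      ∀ i j, x ∈ V i j → z ∈ V i j := by
    intro x z i0 a hx hz i j hxij
    by_cases hi : i = i0
    · subst hi
      have hja : j = a := uniq x i j a hxij hx
      subst hja; exact hz
    · obtain ⟨b, hb⟩ := mem z i
      have hja : j ≠ a := fun h => hi (cuniq x a i i0 (h ▸ hxij) hx)
      have hba : b ≠ a := fun h => hi (cuniq z a i i0 (h ▸ hb) hz)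
      have : j = b := fin2 j a b hja hba
      subst this; exact hb
  have inv : ∀ (x z : X), (∃ i j : Fin 2, σ i x = σ j z) →
      ∀ i j, x ∈ V i j → z ∈ V i j := by
    rintro x z ⟨i0, j0, hσ⟩
    obtain ⟨a, ha⟩ := mem x i0
    obtain ⟨b, hb⟩ := mem z j0
    by_cases hij : i0 = j0
    · subst hij
      have hz : z ∈ V i0 a := by
        have : z ∈ σ i0 ⁻¹' (σ i0 '' V i0 a) := ⟨x, ha, hσ⟩
        rwa [hsatσ] at this
      exact same x z i0 a ha hz
    · have hτ : τ a x = τ b z := by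
        rw [← hagree i0 a x ha, ← hagree j0 b z hb]; exact hσ
      have hab : a ≠ b := by
        intro h; subst h
        have hz : z ∈ V i0 a := by
          have : z ∈ τ a ⁻¹' (τ a '' V i0 a) := ⟨x, ha, hτ⟩
          rwa [hsatτ] at this
        exact hij (cuniq z a i0 j0 hz hb)
      obtain ⟨b', hb'⟩ := mem z i0
      have hb'b : b' ≠ b := fun h => hij (cuniq z b i0 j0 (h ▸ hb') hb)
      have hba : b' = a := fin2 b' b a hb'b hab
      exact same x z i0 a ha (hba ▸ hb')
  have key : ∀ x z : X, Relation.EqvGen (fun x z => ∃ i j : Fin 2, σ i x = σ j z) x z →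
      ∀ i j, (x ∈ V i j ↔ z ∈ V i j) := by
    intro x z h
    induction h with
    | rel x y hxy =>
        intro i j
        exact ⟨inv x y hxy i j, inv y x (by obtain ⟨i', j', h⟩ := hxy; exact ⟨j', i', h.symm⟩) i j⟩
    | refl x => exact fun i j => Iff.rfl
    | symm x y _ ih => exact fun i j => (ih i j).symm
    | trans x y z _ _ ih1 ih2 => exact fun i j => (ih1 i j).trans (ih2 i j)
  cases isEmpty_or_nonempty X with
  | inl hempty =>
      left
      constructor <;> (funext x; exact (hempty.false x).elim)
  | inr hne =>
      obtain ⟨x0⟩ := hne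
      obtain ⟨j0, h0⟩ := mem x0 0
      obtain ⟨j1, h1⟩ := mem x0 1
      have hj : j0 ≠ j1 := by
        intro h
        exact (by decide : (0 : Fin 2) ≠ 1) (cuniq x0 j0 0 1 h0 (h ▸ h1))
      have hall0 : ∀ x, σ 0 x = τ j0 x := fun x =>
        hagree 0 j0 x ((key x0 x (hclass x0 x) 0 j0).mp h0)
      have hall1 : ∀ x, σ 1 x = τ j1 x := fun x =>
        hagree 1 j1 x ((key x0 x (hclass x0 x) 1 j1).mp h1)
      by_cases h : j0 = 0
      · left
        have h1' : j1 = 1 := fin2 j1 0 1 (fun hh => hj (h.trans hh.symm)) (by decide)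
        subst h; subst h1'
        exact ⟨funext hall0, funext hall1⟩
      · right
        have h0' : j0 = 1 := fin2 j0 0 1 h (by decide)
        have h1' : j1 = 0 := fin2 j1 1 0 (fun hh => hj (h0'.trans hh.symm)) (by decide)
        subst h0'; subst h1'
        exact ⟨funext hall0, funext hall1⟩
end
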